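/- There exists a universal constant p₀ ∈ (0,1) with p₀ ≥ 0.15 such that, if (C1), (C2) and (C3) hold and h ≤ 1/L, then for the coupling of Euler transition steps, π(x,y) ≥ p₀·1_{r≤√h} for all x, y ∈ ℝ^d, where r = |x−y|. -/

import Mathlib

open MeasureTheory ProbabilityTheory Set
open scoped ENNReal Classical RealInnerProductSpace

noncomputable section

/-- Euclidean state space `ℝ^d`. -/
abbrev Ed (d : ℕ) := EuclideanSpace ℝ (Fin d)

/-- The standard Gaussian measure `N(0, I_d)` on `ℝ^d`. -/
def stdGaussian (d : ℕ) : Measure (Ed d) :=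
  (Measure.pi fun _ : Fin d => gaussianReal 0 1).map
    (MeasurableEquiv.toLp 2 (Fin d → ℝ))

/-- The uniform distribution on the unit interval. -/
def unif01 : Measure ℝ := volume.restrict (Set.Ioc (0:ℝ) 1)

variable {d : ℕ}

/-- The deterministic part of the Euler step: `x̂ = x + h·b(x)`. -/
def hatPt (h : ℝ) (b : Ed d → Ed d) (x : Ed d) : Ed d := x + h • b x

/-- Density ratio `φ_{ŷ,hI}(w) / φ_{x̂,hI}(w)` of the Gaussian transition densities. -/
def densRatio (h : ℝ) (xh yh w : Ed d) : ℝ :=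
  Real.exp ((‖w - xh‖ ^ 2 - ‖w - yh‖ ^ 2) / (2 * h))

/-- The reflected point `Y'_refl = ŷ + √h (I − 2êêᵀ) z`, where `ê` is the unit vector in
direction `x̂ − ŷ` (and `ê = 0` if `x̂ = ŷ`). -/
def reflPt (h : ℝ) (xh yh z : Ed d) : Ed d :=
  yh + Real.sqrt h •
    (z - (2 * ⟪‖xh - yh‖⁻¹ • (xh - yh), z⟫) • (‖xh - yh‖⁻¹ • (xh - yh)))

/-- The coupling map: given the noise `z` and the uniform variable `u`, it returns
`X' = x̂ + √h z` and `Y' = X'` if `u ≤ φ_{ŷ,hI}(X')/φ_{x̂,hI}(X')`, `Y' = Y'_refl`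
otherwise. -/
def cplMap (h : ℝ) (b : Ed d → Ed d) (x y : Ed d) (zu : Ed d × ℝ) : Ed d × Ed d :=
  (hatPt h b x + Real.sqrt h • zu.1,
    if zu.2 ≤ densRatio h (hatPt h b x) (hatPt h b y) (hatPt h b x + Real.sqrt h • zu.1)
    then hatPt h b x + Real.sqrt h • zu.1
    else reflPt h (hatPt h b x) (hatPt h b y) zu.1)

/-- The law of the coupled pair `(X', Y')` of Euler transition steps from `x` and `y`. -/
def cplMeasure (h : ℝ) (b : Ed d → Ed d) (x y : Ed d) : Measure (Ed d × Ed d) :=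
  ((stdGaussian d).prod unif01).map (cplMap h b x y)

/-- `β(x,y) = E_{x,y}[R' − r]`. -/
def betaE (h : ℝ) (b : Ed d → Ed d) (x y : Ed d) : ℝ :=
  ∫ w, (‖w.1 - w.2‖ - ‖x - y‖) ∂(cplMeasure h b x y)

/-- `β̂(x,y) = E_{x,y}[R' − r̂]`. -/
def betaHat (h : ℝ) (b : Ed d → Ed d) (x y : Ed d) : ℝ :=
  ∫ w, (‖w.1 - w.2‖ - ‖hatPt h b x - hatPt h b y‖) ∂(cplMeasure h b x y)

/-- `u(s) = √h·1_{s<√h}`. -/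
def uFun (h s : ℝ) : ℝ := if s < Real.sqrt h then Real.sqrt h else 0

/-- `l(s) = √h·1_{s≥√h}`. -/
def lFun (h s : ℝ) : ℝ := if s < Real.sqrt h then 0 else Real.sqrt h

/-- `α(x,y) = E_{x,y}[(((R'−r) ∧ u(r)) ∨ (−l(r)))²]`. -/
def alphaE (h : ℝ) (b : Ed d → Ed d) (x y : Ed d) : ℝ :=
  ∫ w, (max (min (‖w.1 - w.2‖ - ‖x - y‖) (uFun h ‖x - y‖)) (-(lFun h ‖x - y‖))) ^ 2
    ∂(cplMeasure h b x y)

/-- `α̂(x,y) = E_{x,y}[(((R'−r̂) ∧ u(r̂)) ∨ (−l(r̂)))²]`. -/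
def alphaHat (h : ℝ) (b : Ed d → Ed d) (x y : Ed d) : ℝ :=
  ∫ w, (max (min (‖w.1 - w.2‖ - ‖hatPt h b x - hatPt h b y‖)
      (uFun h ‖hatPt h b x - hatPt h b y‖)) (-(lFun h ‖hatPt h b x - hatPt h b y‖))) ^ 2
    ∂(cplMeasure h b x y)

/-- `π(x,y) = P_{x,y}[R' = 0] = P_{x,y}[X' = Y']`. -/
def piE (h : ℝ) (b : Ed d → Ed d) (x y : Ed d) : ℝ :=
  ((cplMeasure h b x y) {w | w.1 = w.2}).toReal

/-- (C1) one-sided Lipschitz condition. -/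
def CondC1 (b : Ed d → Ed d) (J : ℝ) : Prop :=
  ∀ x y : Ed d, ⟪x - y, b x - b y⟫ ≤ J * ‖x - y‖ ^ 2

/-- (C2) strict contractivity outside a ball of radius `𝓡`. -/
def CondC2 (b : Ed d → Ed d) (K 𝓡 : ℝ) : Prop :=
  ∀ x y : Ed d, 𝓡 ≤ ‖x - y‖ → ⟪x - y, b x - b y⟫ ≤ -K * ‖x - y‖ ^ 2

/-- (C3) global Lipschitz condition. -/
def CondC3 (b : Ed d → Ed d) (L : ℝ) : Prop :=
  ∀ x y : Ed d, ‖b x - b y‖ ≤ L * ‖x - y‖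

/-- Standard normal density `φ_{0,1}`. -/
def stdNormalPdf (t : ℝ) : ℝ := (Real.sqrt (2 * Real.pi))⁻¹ * Real.exp (-(t ^ 2) / 2)

/-!
If `r ≤ √h` and `hL ≤ 1`, then `r̂ ≤ (1 + hL) r ≤ 2√h`. Write `x̂ − ŷ = r̂ v` with `|v| = 1`.
On the event `⟨v, Z⟩ ≤ −1`, which has probability `Φ(−1) ≥ 0.15` because `⟨v, Z⟩` is standard
normal, the log density ratio at `X'` is
`(−r̂² − 2 r̂ √h ⟨v, Z⟩) / (2h) ≥ r̂ (2√h − r̂) / (2h) ≥ 0`,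
so `U ≤ 1 ≤ φ_ŷ(X') / φ_x̂(X')` and the coupling succeeds.
The numerical bound on `Φ(−1)` integrates the lower bound
`φ(x) = φ(a) e^{(a² − x²)/2} ≥ φ(a) (1 + (a² − x²)/2)` over four intervals of length `1/2`.
-/

section GaussianTail

open Real

lemma exp_le_of_le_pow {x q : ℝ} (m n : ℕ) (hx : x = m / n) (hn : n ≠ 0) (hq : 0 ≤ q)
    (h : (2.7182818286 : ℝ) ^ m ≤ q ^ n) : exp x ≤ q := by
  refine le_of_pow_le_pow_left₀ hn hq ?_
  rw [← exp_nat_mul, hx, mul_div_cancel₀ _ (by exact_mod_cast hn), ← exp_one_pow]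
  exact (pow_le_pow_left₀ (exp_pos 1).le exp_one_lt_d9.le m).trans h

lemma gaussianPDFReal_mul_le (a x : ℝ) :
    gaussianPDFReal 0 1 a * (1 + (a ^ 2 - x ^ 2) / 2) ≤ gaussianPDFReal 0 1 x := by
  have hx : gaussianPDFReal 0 1 x = gaussianPDFReal 0 1 a * exp ((a ^ 2 - x ^ 2) / 2) := by
    simp only [gaussianPDFReal, NNReal.coe_one, mul_assoc, ← exp_add]
    congr 2
    ring
  rw [hx]
  gcongr
  · exact gaussianPDFReal_nonneg 0 1 a
  · linarith [add_one_le_exp ((a ^ 2 - x ^ 2) / 2)]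

lemma gaussianPDFReal_mul_le_integral (a δ : ℝ) (hδ : 0 ≤ δ) :
    gaussianPDFReal 0 1 a * (2 * δ - δ ^ 3 / 3) ≤
      ∫ x in (a - δ)..(a + δ), gaussianPDFReal 0 1 x := by
  have hquad : ∫ x in (a - δ)..(a + δ), (1 + a ^ 2 / 2) - 2⁻¹ * x ^ 2 = 2 * δ - δ ^ 3 / 3 := by
    rw [intervalIntegral.integral_sub intervalIntegrable_const
        ((by fun_prop : Continuous _).intervalIntegrable _ _),
      intervalIntegral.integral_const, intervalIntegral.integral_const_mul, integral_pow]
    simp only [smul_eq_mul]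
    ring
  calc gaussianPDFReal 0 1 a * (2 * δ - δ ^ 3 / 3)
      = ∫ x in (a - δ)..(a + δ), gaussianPDFReal 0 1 a * (1 + (a ^ 2 - x ^ 2) / 2) := by
        rw [intervalIntegral.integral_const_mul, ← hquad]
        congr 1
        refine intervalIntegral.integral_congr fun x _ => ?_
        ring
    _ ≤ ∫ x in (a - δ)..(a + δ), gaussianPDFReal 0 1 x :=
        intervalIntegral.integral_mono_on (by linarith)
          ((by fun_prop : Continuous _).intervalIntegrable _ _)
          (integrable_gaussianPDFReal 0 1).intervalIntegrable
          fun x _ => gaussianPDFReal_mul_le a x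

lemma le_gaussianPDFReal {a c q : ℝ} (hq : exp (a ^ 2 / 2) ≤ q)
    (hcq : c * (2.5067 * q) ≤ 1) : c ≤ gaussianPDFReal 0 1 a := by
  have hpi : √(2 * π) ≤ 2.5067 := by
    rw [sqrt_le_left (by norm_num)]
    nlinarith [pi_lt_d6]
  have hpdf : gaussianPDFReal 0 1 a = 1 / (√(2 * π) * exp (a ^ 2 / 2)) := by
    simp [gaussianPDFReal, neg_div, exp_neg]
    ring
  rw [hpdf, le_div_iff₀ (by positivity)]
  rcases le_or_gt c 0 with hc | hc
  · nlinarith [show 0 < √(2 * π) * exp (a ^ 2 / 2) by positivity]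
  · exact le_trans (by gcongr) hcq

lemma ofReal_le_gaussianReal_Iic_neg_one : ENNReal.ofReal 0.15 ≤ gaussianReal 0 1 (Iic (-1)) := by
  have piece (a c q : ℝ) (hq : exp (a ^ 2 / 2) ≤ q) (hcq : c * (2.5067 * q) ≤ 1) :
      c * (2 * 4⁻¹ - 4⁻¹ ^ 3 / 3) ≤ ∫ x in (a - 4⁻¹)..(a + 4⁻¹), gaussianPDFReal 0 1 x :=
    (mul_le_mul_of_nonneg_right (le_gaussianPDFReal hq hcq) (by norm_num)).trans
      (gaussianPDFReal_mul_le_integral a _ (by norm_num))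
  have p₁ := piece (-1.25) 0.1826 2.1845
    (exp_le_of_le_pow 25 32 (by norm_num) (by norm_num) (by norm_num) (by norm_num)) (by norm_num)
  have p₂ := piece (-1.75) 0.0862 4.625
    (exp_le_of_le_pow 49 32 (by norm_num) (by norm_num) (by norm_num) (by norm_num)) (by norm_num)
  have p₃ := piece (-2.25) 0.0317 12.58
    (exp_le_of_le_pow 81 32 (by norm_num) (by norm_num) (by norm_num) (by norm_num)) (by norm_num)
  have p₄ := piece (-2.75) 0.0090 44
    (exp_le_of_le_pow 121 32 (by norm_num) (by norm_num) (by norm_num) (by norm_num)) (by norm_num)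
  norm_num at p₁ p₂ p₃ p₄
  have hint (a b : ℝ) : IntervalIntegrable (gaussianPDFReal 0 1) volume a b :=
    (integrable_gaussianPDFReal 0 1).intervalIntegrable
  have hsum : ∫ x in (-3 : ℝ)..(-1), gaussianPDFReal 0 1 x =
      (∫ x in (-3 : ℝ)..(-5/2), gaussianPDFReal 0 1 x) +
      (∫ x in (-5/2 : ℝ)..(-2), gaussianPDFReal 0 1 x) +
      (∫ x in (-2 : ℝ)..(-3/2), gaussianPDFReal 0 1 x) +
      (∫ x in (-3/2 : ℝ)..(-1), gaussianPDFReal 0 1 x) := by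
    simp only [intervalIntegral.integral_add_adjacent_intervals (hint _ _) (hint _ _)]
  have hmono : ∫ x in (-3 : ℝ)..(-1), gaussianPDFReal 0 1 x ≤
      ∫ x in Iic (-1 : ℝ), gaussianPDFReal 0 1 x := by
    rw [intervalIntegral.integral_of_le (by norm_num)]
    exact setIntegral_mono_set (integrable_gaussianPDFReal 0 1).integrableOn
      (.of_forall (gaussianPDFReal_nonneg 0 1)) Ioc_subset_Iic_self.eventuallyLE
  rw [gaussianReal_apply_eq_integral 0 one_ne_zero]
  exact ENNReal.ofReal_le_ofReal (by linarith)

end GaussianTail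

section StdGaussian

variable {E : Type*} [NormedAddCommGroup E] [InnerProductSpace ℝ E] [FiniteDimensional ℝ E]
  [MeasurableSpace E] [BorelSpace E]

lemma stdGaussian_map_inner_of_norm_eq_one {v : E} (hv : ‖v‖ = 1) :
    (ProbabilityTheory.stdGaussian E).map (⟪v, ·⟫) = gaussianReal 0 1 := by
  have := IsGaussian.map_eq_gaussianReal (μ := ProbabilityTheory.stdGaussian E) (innerSL ℝ v)
  rw [integral_strongDual_stdGaussian, variance_dual_stdGaussian, innerSL_apply_norm, hv] at this
  simpa using this

lemma ofReal_le_stdGaussian_inner_le_neg_one {v : E} (hv : ‖v‖ = 1) :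
    ENNReal.ofReal 0.15 ≤ ProbabilityTheory.stdGaussian E {z | ⟪v, z⟫ ≤ -1} := by
  have hmeas : Measurable (⟪v, ·⟫ : E → ℝ) := by fun_prop
  change _ ≤ ProbabilityTheory.stdGaussian E ((⟪v, ·⟫) ⁻¹' Iic (-1))
  rw [← Measure.map_apply hmeas measurableSet_Iic,
    stdGaussian_map_inner_of_norm_eq_one hv]
  exact ofReal_le_gaussianReal_Iic_neg_one

end StdGaussian

lemma exists_norm_eq_one_smul_eq {E : Type*} [NormedAddCommGroup E] [NormedSpace ℝ E]
    [Nontrivial E] (w : E) : ∃ v : E, ‖v‖ = 1 ∧ w = ‖w‖ • v := by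
  rcases eq_or_ne w 0 with rfl | hw
  · obtain ⟨v, hv⟩ := exists_norm_eq E zero_le_one
    exact ⟨v, hv, by simp⟩
  · exact ⟨‖w‖⁻¹ • w, norm_smul_inv_norm hw, (smul_inv_smul₀ (norm_ne_zero_iff.2 hw) w).symm⟩

lemma stdGaussian_eq_stdGaussian_euclidean (d : ℕ) :
    stdGaussian d = ProbabilityTheory.stdGaussian (Ed d) :=
  map_pi_eq_stdGaussian

instance : IsProbabilityMeasure unif01 :=
  ⟨by simp [unif01]⟩

lemma unif01_Ioc : unif01 (Ioc 0 1) = 1 := by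
  simp [unif01]

lemma norm_hatPt_sub_le {h L : ℝ} {b : Ed d → Ed d} (hb : CondC3 b L) (hh : 0 ≤ h) (x y : Ed d) :
    ‖hatPt h b x - hatPt h b y‖ ≤ (1 + h * L) * ‖x - y‖ := by
  have hxy : hatPt h b x - hatPt h b y = (x - y) + h • (b x - b y) := by
    simp only [hatPt, smul_sub]
    abel
  calc ‖hatPt h b x - hatPt h b y‖ ≤ ‖x - y‖ + h * ‖b x - b y‖ := by
        rw [hxy]
        refine (norm_add_le _ _).trans_eq ?_
        rw [norm_smul, Real.norm_of_nonneg hh]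
    _ ≤ ‖x - y‖ + h * (L * ‖x - y‖) := by gcongr; exact hb x y
    _ = (1 + h * L) * ‖x - y‖ := by ring

lemma one_le_densRatio {h s : ℝ} {xh yh v z : Ed d} (hh : 0 < h) (hv : ‖v‖ = 1)
    (hxy : xh - yh = s • v) (hs₀ : 0 ≤ s) (hs : s ≤ 2 * √h) (hz : ⟪v, z⟫ ≤ -1) :
    1 ≤ densRatio h xh yh (xh + √h • z) := by
  have hnum : ‖xh + √h • z - xh‖ ^ 2 - ‖xh + √h • z - yh‖ ^ 2 = -s ^ 2 - 2 * s * √h * ⟪v, z⟫ := by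
    rw [add_sub_cancel_left, add_sub_right_comm, hxy, norm_add_sq_real, norm_smul, norm_smul,
      real_inner_smul_left, real_inner_smul_right, hv, Real.norm_of_nonneg hs₀]
    ring
  refine Real.one_le_exp (div_nonneg ?_ (by positivity))
  rw [hnum]
  nlinarith [mul_nonneg hs₀ (sub_nonneg.2 hs),
    mul_nonneg (mul_nonneg hs₀ (Real.sqrt_nonneg h)) (by linarith : (0 : ℝ) ≤ -1 - ⟪v, z⟫)]

lemma measurable_cplMap (h : ℝ) (b : Ed d → Ed d) (x y : Ed d) : Measurable (cplMap h b x y) := by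
  have hcond : MeasurableSet {zu : Ed d × ℝ |
      zu.2 ≤ densRatio h (hatPt h b x) (hatPt h b y) (hatPt h b x + √h • zu.1)} :=
    measurableSet_le measurable_snd (by unfold densRatio; fun_prop)
  exact (by fun_prop : Measurable fun zu : Ed d × ℝ => hatPt h b x + √h • zu.1).prodMk
    (Measurable.ite hcond (by fun_prop) (by unfold reflPt; fun_prop))

lemma piE_ge_of_norm_hatPt_sub_le (hd : 1 ≤ d) {h : ℝ} (hh : 0 < h) {b : Ed d → Ed d}
    {x y : Ed d} (hr : ‖hatPt h b x - hatPt h b y‖ ≤ 2 * √h) : 0.15 ≤ piE h b x y := by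
  have : Nonempty (Fin d) := ⟨⟨0, hd⟩⟩
  obtain ⟨v, hv, hxy⟩ := exists_norm_eq_one_smul_eq (hatPt h b x - hatPt h b y)
  have hsub : {z : Ed d | ⟪v, z⟫ ≤ -1} ×ˢ Ioc 0 1 ⊆ cplMap h b x y ⁻¹' {w | w.1 = w.2} := by
    rintro ⟨z, u⟩ ⟨hz, hu⟩
    have hratio := one_le_densRatio hh hv hxy (norm_nonneg _) hr hz
    show (cplMap h b x y (z, u)).1 = (cplMap h b x y (z, u)).2
    simp only [cplMap, if_pos (hu.2.trans hratio)]
  rw [piE, cplMeasure, Measure.map_apply (measurable_cplMap h b x y)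
    (isClosed_eq continuous_fst continuous_snd).measurableSet,
    stdGaussian_eq_stdGaussian_euclidean,
    ← ENNReal.ofReal_le_iff_le_toReal (measure_ne_top _ _)]
  calc ENNReal.ofReal 0.15
      ≤ ProbabilityTheory.stdGaussian (Ed d) {z | ⟪v, z⟫ ≤ -1} :=
        ofReal_le_stdGaussian_inner_le_neg_one hv
    _ = ((ProbabilityTheory.stdGaussian (Ed d)).prod unif01) ({z | ⟪v, z⟫ ≤ -1} ×ˢ Ioc 0 1) := by
        rw [Measure.prod_prod, unif01_Ioc, mul_one]
    _ ≤ _ := measure_mono hsub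

/-- Lemma 2.9 (vii): there is a universal constant `p₀ ∈ (0,1)`,
`p₀ ≥ 0.15`, such that under (C1), (C2), (C3) and `h ≤ 1/L`,
`π(x,y) ≥ p₀·1_{r ≤ √h}` for the coupled Euler transition steps. -/
theorem stmt12 :
    ∃ p₀ : ℝ, p₀ ∈ Set.Ioo (0:ℝ) 1 ∧ 0.15 ≤ p₀ ∧
      ∀ d : ℕ, 1 ≤ d → ∀ h : ℝ, 0 < h → ∀ b : Ed d → Ed d, Measurable b →
      ∀ J K L 𝓡 : ℝ, 0 ≤ J → 0 < K → 0 < L → 0 < 𝓡 →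
        CondC1 b J → CondC2 b K 𝓡 → CondC3 b L → h ≤ 1 / L →
      ∀ x y : Ed d,
        (if ‖x - y‖ ≤ Real.sqrt h then p₀ else 0) ≤ piE h b x y := by
  refine ⟨0.15, ⟨by norm_num, by norm_num⟩, le_rfl, ?_⟩
  intro d hd h hh b _ _ _ L _ _ _ hL _ _ _ hC3 hhL x y
  split_ifs with hr
  · have hhL' : h * L ≤ 1 := by rwa [le_div_iff₀ hL] at hhL
    refine piE_ge_of_norm_hatPt_sub_le hd hh ?_
    calc ‖hatPt h b x - hatPt h b y‖ ≤ (1 + h * L) * ‖x - y‖ := norm_hatPt_sub_le hC3 hh.le x y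
      _ ≤ 2 * √h := mul_le_mul (by linarith) hr (norm_nonneg _) zero_le_two
  · exact ENNReal.toReal_nonneg

end
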